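/- Λ(c) tends to +∞ as c tends to −∞: for every L̄ > 0 there exists c̄ < 0 such that for all c < c̄, problem (P₁) with parameters (c, L) admits no solution whenever L ≤ L̄ (i.e., Λ(c) > L̄ for all c < c̄). -/

import Mathlib

open Filter Set

noncomputable section

/-- Hypothesis (H1): `g` is a smooth bistable nonlinearity with zeros exactly
`0, α, 1` in `[0,1]`, `g'(0) < 0`, `g'(1) < 0`, `g'(α) > 0` and `∫₀¹ g > 0`. -/
structure BistableHyp (g : ℝ → ℝ) (α : ℝ) : Prop where
  smooth : ContDiff ℝ (⊤ : ℕ∞) g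
  alpha_pos : 0 < α
  alpha_lt_one : α < 1
  g_zero : g 0 = 0
  g_alpha : g α = 0
  g_one : g 1 = 0
  zeros : ∀ s ∈ Set.Icc (0:ℝ) 1, g s = 0 → s = 0 ∨ s = α ∨ s = 1
  deriv_zero_neg : deriv g 0 < 0
  deriv_one_neg : deriv g 1 < 0
  deriv_alpha_pos : 0 < deriv g α
  int_pos : 0 < ∫ s in (0:ℝ)..1, g s

/-- `u` satisfies the differential equation of problem (P₁) with parameters `(c, L)`,
together with the regularity (`C¹` on `ℝ`, `C²` away from `{0, L}`) and the bound
`0 ≤ u ≤ 1`. -/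
def SatODE1 (g : ℝ → ℝ) (μ c L : ℝ) (u : ℝ → ℝ) : Prop :=
  ContDiff ℝ 1 u ∧
  (∀ x : ℝ, x ≠ 0 → x ≠ L → ContDiffAt ℝ 2 u x) ∧
  (∀ x : ℝ, 0 ≤ u x ∧ u x ≤ 1) ∧
  (∀ x : ℝ, x ∉ Set.Icc (0:ℝ) L → -c * deriv u x - deriv (deriv u) x = g (u x)) ∧
  (∀ x ∈ Set.Ioo (0:ℝ) L, -c * deriv u x - deriv (deriv u) x = -μ * u x)

/-- `u` is a solution of problem (P₁) with parameters `(c, L)`: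
it satisfies the equation and the limit conditions `u(−∞) = 1`, `u(+∞) = 0`. -/
def IsSolP1 (g : ℝ → ℝ) (μ c L : ℝ) (u : ℝ → ℝ) : Prop :=
  SatODE1 g μ c L u ∧
  Tendsto u atBot (nhds 1) ∧
  Tendsto u atTop (nhds 0)

/-- `u` is the minimal solution of (P₁) with parameters `(c, L)`: any solution `v` of the
same differential equation with `v ≤ u` on `ℝ₊` equals `0` or `u`. -/
def IsMinSolP1 (g : ℝ → ℝ) (μ c L : ℝ) (u : ℝ → ℝ) : Prop :=
  IsSolP1 g μ c L u ∧
  ∀ v : ℝ → ℝ, SatODE1 g μ c L v → (∀ x : ℝ, 0 ≤ x → v x ≤ u x) →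
    v = (fun _ => (0:ℝ)) ∨ v = u

/-- `Λ(c)`: the infimum of sizes `L > 0` for which (P₁) with parameters `(c, L)` admits
a solution. -/
def Lam (g : ℝ → ℝ) (μ c : ℝ) : ℝ :=
  sInf {L : ℝ | 0 < L ∧ ∃ u : ℝ → ℝ, IsSolP1 g μ c L u}

/-- A decreasing traveling wave of speed `c` connecting `α` (at `−∞`) to `0` (at `+∞`). -/
def IsTWAlphaZero (g : ℝ → ℝ) (c α : ℝ) (w : ℝ → ℝ) : Prop :=
  ContDiff ℝ 2 w ∧ StrictAnti w ∧
  (∀ x : ℝ, -c * deriv w x - deriv (deriv w) x = g (w x)) ∧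
  Tendsto w atBot (nhds α) ∧ Tendsto w atTop (nhds 0)

/-- A sub-solution of (P₁) with parameters `(c, L)`. -/
def IsSubSolP1 (g : ℝ → ℝ) (μ c L : ℝ) (ψ : ℝ → ℝ) : Prop :=
  Continuous ψ ∧
  (∀ x : ℝ, x ≠ 0 → x ≠ L → ContDiffAt ℝ 2 ψ x) ∧
  (∀ x : ℝ, x ∉ Set.Icc (0:ℝ) L → -c * deriv ψ x - deriv (deriv ψ) x ≤ g (ψ x)) ∧
  (∀ x ∈ Set.Ioo (0:ℝ) L, -c * deriv ψ x - deriv (deriv ψ) x ≤ -μ * ψ x) ∧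
  (∀ ξ ∈ ({0, L} : Set ℝ), ∃ a b : ℝ,
    Tendsto (deriv ψ) (nhdsWithin ξ (Set.Iio ξ)) (nhds a) ∧
    Tendsto (deriv ψ) (nhdsWithin ξ (Set.Ioi ξ)) (nhds b) ∧ a ≤ b)

/-- Minimal solution of the half problem: only the limit condition at `−∞` is imposed. -/
def IsMinSolHalf (g : ℝ → ℝ) (μ c L : ℝ) (u : ℝ → ℝ) : Prop :=
  SatODE1 g μ c L u ∧
  Tendsto u atBot (nhds 1) ∧
  ∀ v : ℝ → ℝ, SatODE1 g μ c L v → (∀ x : ℝ, 0 ≤ x → v x ≤ u x) →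
    v = (fun _ => (0:ℝ)) ∨ v = u

open Topology


lemma hasDerivAt_deriv_of_contDiffAt {u : ℝ → ℝ} {x : ℝ} (h : ContDiffAt ℝ 2 u x) :
    HasDerivAt (deriv u) (deriv (deriv u) x) x := by
  have h1 : ContDiffAt ℝ 1 (fderiv ℝ u) x := h.fderiv_right (by norm_num)
  have h2 : DifferentiableAt ℝ (fun y => fderiv ℝ u y (1:ℝ)) x :=
    (h1.differentiableAt one_ne_zero).clm_apply (differentiableAt_const _)
  have he : (fun y => fderiv ℝ u y (1:ℝ)) = deriv u := funext fun y => fderiv_apply_one_eq_deriv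
  rw [he] at h2
  exact h2.hasDerivAt

lemma no_large_deriv (u : ℝ → ℝ) (hu : ContDiff ℝ 1 u) (hb : ∀ x, 0 ≤ u x ∧ u x ≤ 1)
    {ε a b : ℝ} (hε : 0 < ε) (hab : a + 2/ε ≤ b)
    (h : ∀ z ∈ Set.Icc a b, ε ≤ |deriv u z|) : False := by
  have h2ε : (0:ℝ) < 2/ε := by positivity
  have hab' : a ≤ b := by linarith
  have hcont : Continuous (deriv u) := hu.continuous_deriv le_rfl
  have habs : ∀ z ∈ Set.Icc a b, deriv u z ≤ -ε ∨ ε ≤ deriv u z := by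
    intro z hz
    rcases le_or_gt ε (deriv u z) with h' | h'
    · exact Or.inr h'
    · left
      rcases abs_cases (deriv u z) with ⟨he, _⟩ | ⟨he, _⟩
      · linarith [h z hz, he.symm ▸ h z hz]
      · have := h z hz; rw [he] at this; linarith
  have hftc : u b - u a = ∫ x in a..b, deriv u x := by
    rw [intervalIntegral.integral_deriv_eq_sub
      (fun x _ => (hu.differentiable one_ne_zero).differentiableAt)
      (hcont.intervalIntegrable a b)]
  have h2 : (2:ℝ) ≤ ε * (b - a) := by
    have hba : 2/ε ≤ b - a := by linarith
    calc (2:ℝ) = ε * (2/ε) := by field_simp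
    _ ≤ ε * (b - a) := by apply mul_le_mul_of_nonneg_left hba hε.le
  have hsign : (∀ z ∈ Set.Icc a b, ε ≤ deriv u z) ∨ (∀ z ∈ Set.Icc a b, deriv u z ≤ -ε) := by
    rcases habs a ⟨le_rfl, hab'⟩ with ha | ha
    · right
      intro z hz
      by_contra hlt
      push_neg at hlt
      have hz2 : ε ≤ deriv u z := by
        rcases habs z hz with h' | h'
        · linarith
        · exact h'
      have hiv := intermediate_value_Icc hz.1 (hcont.continuousOn (s := Set.Icc a z))
      have h0 : (0:ℝ) ∈ Set.Icc (deriv u a) (deriv u z) := ⟨by linarith, by linarith⟩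
      obtain ⟨w, hw, hw0⟩ := hiv h0
      have := h w ⟨hw.1, le_trans hw.2 hz.2⟩
      rw [hw0] at this; simp at this; linarith
    · left
      intro z hz
      by_contra hlt
      push_neg at hlt
      have hz2 : deriv u z ≤ -ε := by
        rcases habs z hz with h' | h'
        · exact h'
        · linarith
      have hiv := intermediate_value_Icc' hz.1 (hcont.continuousOn (s := Set.Icc a z))
      have h0 : (0:ℝ) ∈ Set.Icc (deriv u z) (deriv u a) := ⟨by linarith, by linarith⟩
      obtain ⟨w, hw, hw0⟩ := hiv h0
      have := h w ⟨hw.1, le_trans hw.2 hz.2⟩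
      rw [hw0] at this; simp at this; linarith
  rcases hsign with hs | hs
  · have hmono : (∫ x in a..b, (ε:ℝ)) ≤ ∫ x in a..b, deriv u x :=
      intervalIntegral.integral_mono_on hab' (intervalIntegrable_const)
        (hcont.intervalIntegrable a b) hs
    rw [intervalIntegral.integral_const, smul_eq_mul] at hmono
    have h1 := (hb a).1
    have h2' := (hb b).2
    have heq : (b - a) * ε = ε * (b - a) := by ring
    rw [heq] at hmono
    linarith [hftc ▸ hmono]
  · have hmono : (∫ x in a..b, deriv u x) ≤ ∫ x in a..b, (-ε:ℝ) :=
      intervalIntegral.integral_mono_on hab' (hcont.intervalIntegrable a b)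
        (intervalIntegrable_const) hs
    rw [intervalIntegral.integral_const, smul_eq_mul] at hmono
    have h1 := (hb b).1
    have h2' := (hb a).2
    have heq : (b - a) * (-ε) = -(ε * (b-a)) := by ring
    rw [heq] at hmono
    linarith [hftc ▸ hmono]

lemma exists_deriv_small_ge (u : ℝ → ℝ) (hu : ContDiff ℝ 1 u) (hb : ∀ x, 0 ≤ u x ∧ u x ≤ 1)
    {ε : ℝ} (hε : 0 < ε) (N : ℝ) : ∃ z, N ≤ z ∧ |deriv u z| < ε := by
  by_contra h
  push_neg at h
  exact no_large_deriv u hu hb hε (le_refl (N + 2/ε)) (fun z hz => h z hz.1)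

lemma exists_deriv_small_le (u : ℝ → ℝ) (hu : ContDiff ℝ 1 u) (hb : ∀ x, 0 ≤ u x ∧ u x ≤ 1)
    {ε : ℝ} (hε : 0 < ε) (N : ℝ) : ∃ z, z ≤ N ∧ |deriv u z| < ε := by
  by_contra h
  push_neg at h
  exact no_large_deriv u hu hb hε (by simp : N - 2/ε + 2/ε ≤ N) (fun z hz => h z hz.2)

lemma sq_le_sq_of_le_of_nonpos {d e : ℝ} (h1 : d ≤ e) (h2 : e ≤ 0) : e^2 ≤ d^2 := by
  nlinarith

lemma arith_case1_sq (c d K mu : ℝ) (h : (c*(d/2))^2/2 - K ≤ 2*K + mu/2) :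
    c^2*d^2 ≤ 24*K + 4*mu := by nlinarith

lemma arith_case1_final (c d K mu : ℝ) (hK : 0 ≤ K) (hmu : 0 < mu) (hd : 0 < d)
    (h1 : 2*(6*K + mu + 1) < (-c)*d) (h2 : c^2*d^2 ≤ 24*K + 4*mu) : False := by
  have ha : (0:ℝ) < 2*(6*K + mu + 1) := by linarith
  have hgt0 := mul_pos (sub_pos.mpr h1) (by linarith : (0:ℝ) < (-c)*d + 2*(6*K + mu + 1))
  have hgt : (2*(6*K + mu + 1))^2 < c^2*d^2 := by nlinarith
  have hone : (1:ℝ) ≤ 6*K + mu + 1 := by linarith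
  have hsq3 : 6*K + mu + 1 ≤ (6*K + mu + 1)^2 := by nlinarith
  nlinarith

lemma arith_case2 (c d K mu Lb : ℝ) (hc : 0 < -c) (hmu : 0 < mu) (hLb : 0 < Lb)
    (hcb2 : 4*Lb*(K + mu) < (-c)*d^2) : (K + mu/2)*Lb ≤ d/4*d*(-c) := by
  nlinarith

lemma arith_amgm (w t : ℝ) (ht : 0 < t) : -w * (2*t) ≤ t^2 + w^2 := by
  nlinarith [sq_nonneg (w + t)]

set_option maxHeartbeats 1600000 in
/-- `Λ(c) → +∞` as `c → −∞`: for every `L̄ > 0` there is `c̄ < 0` such that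
for all `c < c̄`, (P₁) with parameters `(c, L)` has no solution whenever `0 < L ≤ L̄`. -/
theorem stmt6 (g : ℝ → ℝ) (α μ : ℝ) (hg : BistableHyp g α)
    (hμ : 0 < μ) (hμg : ∀ u ∈ Set.Icc (0:ℝ) 1, -μ * u ≤ g u)
    (Lbar : ℝ) (hLbar : 0 < Lbar) :
    ∃ cbar : ℝ, cbar < 0 ∧ ∀ c : ℝ, c < cbar → ∀ L : ℝ, 0 < L → L ≤ Lbar →
      ¬ ∃ u : ℝ → ℝ, IsSolP1 g μ c L u := by
  classical
  have hgc : Continuous g := hg.smooth.continuous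
  obtain ⟨K, hKnn, hgK⟩ : ∃ K : ℝ, 0 ≤ K ∧ ∀ s ∈ Set.Icc (0:ℝ) 1, |g s| ≤ K := by
    obtain ⟨K0, hK0⟩ := (isCompact_Icc (a := (0:ℝ)) (b := 1)).exists_bound_of_continuousOn
      hgc.continuousOn
    exact ⟨max K0 0, le_max_right _ _,
      fun s hs => le_trans (by simpa using hK0 s hs) (le_max_left _ _)⟩
  obtain ⟨G, hGcont, hGd, hG0, hG1pos, hGK⟩ : ∃ G : ℝ → ℝ, Continuous G ∧
      (∀ s, HasDerivAt G (g s) s) ∧ G 0 = 0 ∧ 0 < G 1 ∧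
      ∀ s ∈ Set.Icc (0:ℝ) 1, |G s| ≤ K := by
    refine ⟨fun s => ∫ t in (0:ℝ)..s, g t, ?_, ?_, ?_, ?_, ?_⟩
    · exact Differentiable.continuous
        (fun s => ((hgc.integral_hasStrictDerivAt 0 s).hasDerivAt).differentiableAt)
    · exact fun s => (hgc.integral_hasStrictDerivAt 0 s).hasDerivAt
    · exact intervalIntegral.integral_same
    · exact hg.int_pos
    · intro s hs
      have hb : ∀ x ∈ Set.uIoc (0:ℝ) s, ‖g x‖ ≤ K := by
        intro x hx
        rcases Set.mem_uIoc.mp hx with ⟨h1, h2⟩ | ⟨h1, h2⟩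
        · exact (Real.norm_eq_abs _) ▸ hgK x ⟨h1.le, le_trans h2 hs.2⟩
        · linarith [hs.1]
      have hnorm := intervalIntegral.norm_integral_le_of_norm_le_const hb
      rw [Real.norm_eq_abs] at hnorm
      have hs1 : |s - 0| ≤ 1 := by
        rw [sub_zero, abs_of_nonneg hs.1]; exact hs.2
      calc |∫ t in (0:ℝ)..s, g t| ≤ K * |s - 0| := hnorm
      _ ≤ K * 1 := mul_le_mul_of_nonneg_left hs1 hKnn
      _ = K := mul_one K
  obtain ⟨δ, hδpos, hδ1, hδg, hδG⟩ : ∃ δ : ℝ, 0 < δ ∧ δ ≤ 1 ∧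
      (∀ s, 1 - δ ≤ s → s ≤ 1 → 0 ≤ g s) ∧
      (∀ s, 1 - δ ≤ s → s ≤ 1 → G 1 / 2 < G s) := by
    have hgdiff : DifferentiableAt ℝ g 1 := (hg.smooth.differentiable (by simp)).differentiableAt
    obtain ⟨a0, ha0, hgpos⟩ : ∃ a < (1:ℝ), ∀ s, a < s → s < 1 → 0 ≤ g s := by
      have hslope : Tendsto (slope g 1) (𝓝[≠] (1:ℝ)) (𝓝 (deriv g 1)) :=
        hasDerivAt_iff_tendsto_slope.mp hgdiff.hasDerivAt
      have hev : ∀ᶠ y in 𝓝[≠] (1:ℝ), slope g 1 y < 0 :=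
        hslope.eventually (eventually_lt_nhds hg.deriv_one_neg)
      have hev2 : ∀ᶠ y in 𝓝[<] (1:ℝ), slope g 1 y < 0 :=
        hev.filter_mono (nhdsWithin_mono 1 (fun y hy => ne_of_lt hy))
      have hev3 : ∀ᶠ y in 𝓝[<] (1:ℝ), 0 ≤ g y := by
        filter_upwards [hev2, self_mem_nhdsWithin] with y hy hy'
        have hylt : y < (1:ℝ) := hy'
        rw [slope_def_field, hg.g_one, sub_zero] at hy
        rcases div_neg_iff.mp hy with ⟨h1, h2⟩ | ⟨h1, h2⟩
        · linarith
        · linarith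
      obtain ⟨a, ha, hsub⟩ := mem_nhdsLT_iff_exists_Ioo_subset.mp hev3
      exact ⟨a, ha, fun s hs1 hs2 => hsub ⟨hs1, hs2⟩⟩
    obtain ⟨ε0, hε0, hGnear⟩ : ∃ ε > (0:ℝ), ∀ s, |s - 1| < ε → G 1 / 2 < G s := by
      have hev : ∀ᶠ s in 𝓝 (1:ℝ), G 1 / 2 < G s :=
        hGcont.continuousAt.eventually (eventually_gt_nhds (by linarith))
      rw [Metric.eventually_nhds_iff] at hev
      obtain ⟨ε, hε, h'⟩ := hev
      exact ⟨ε, hε, fun s hs => h' (by simpa [Real.dist_eq] using hs)⟩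
    refine ⟨min (min ((1 - a0)/2) (ε0/2)) 1,
      lt_min (lt_min (by linarith) (by linarith)) one_pos, min_le_right _ _, ?_, ?_⟩
    · intro s h1 h2
      have ha : min (min ((1 - a0)/2) (ε0/2)) 1 ≤ (1 - a0)/2 :=
        le_trans (min_le_left _ _) (min_le_left _ _)
      rcases lt_or_eq_of_le h2 with h' | h'
      · exact hgpos s (by linarith) h'
      · rw [h', hg.g_one]
    · intro s h1 h2
      have ha : min (min ((1 - a0)/2) (ε0/2)) 1 ≤ ε0/2 :=
        le_trans (min_le_left _ _) (min_le_right _ _)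
      apply hGnear
      rw [abs_of_nonpos (by linarith : s - 1 ≤ 0)]
      linarith
  obtain ⟨θ, hθdef⟩ : ∃ θ : ℝ, θ = 1 - δ/2 := ⟨_, rfl⟩
  have hθlt1 : θ < 1 := by rw [hθdef]; linarith
  have hθδ : 1 - δ ≤ θ := by rw [hθdef]; linarith
  refine ⟨-(2*(6*K + μ + 1)/δ + 4*Lbar*(K + μ)/δ^2 + 1), by
    have : 0 < 2*(6*K + μ + 1)/δ + 4*Lbar*(K + μ)/δ^2 + 1 := by positivity
    linarith, ?_⟩
  rintro c hc L hL hLb ⟨u, ⟨hu1, hu2, hub, heqg, heqμ⟩, hbot, htop⟩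
  have hX1 : (0:ℝ) ≤ 2*(6*K + μ + 1)/δ := by positivity
  have hX2 : (0:ℝ) ≤ 4*Lbar*(K + μ)/δ^2 := by positivity
  have hcneg : c < 0 := by linarith
  have hcpos : 0 < -c := by linarith
  have hcb1 : 2*(6*K + μ + 1) < (-c)*δ := by
    have h1 : 2*(6*K + μ + 1)/δ < -c := by linarith
    calc 2*(6*K + μ + 1) = (2*(6*K + μ + 1)/δ)*δ := by field_simp
    _ < (-c)*δ := by exact mul_lt_mul_of_pos_right h1 hδpos
  have hcb2 : 4*Lbar*(K + μ) < (-c)*δ^2 := by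
    have h1 : 4*Lbar*(K + μ)/δ^2 < -c := by linarith
    calc 4*Lbar*(K + μ) = (4*Lbar*(K + μ)/δ^2)*δ^2 := by field_simp
    _ < (-c)*δ^2 := by exact mul_lt_mul_of_pos_right h1 (by positivity)
  have hucont : Continuous u := hu1.continuous
  have hu'c : Continuous (deriv u) := hu1.continuous_deriv le_rfl
  have hudiff : ∀ x : ℝ, HasDerivAt u (deriv u x) x :=
    fun x => ((hu1.differentiable one_ne_zero) x).hasDerivAt
  have hΦcont : Continuous (fun x => (deriv u x)^2/2 + G (u x)) :=
    ((hu'c.pow 2).div_const 2).add (hGcont.comp hucont)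
  have hΨcont : Continuous (fun x => (deriv u x)^2/2 - μ * (u x)^2/2) :=
    ((hu'c.pow 2).div_const 2).sub ((continuous_const.mul (hucont.pow 2)).div_const 2)
  have hsq : ∀ (x d : ℝ), HasDerivAt (deriv u) d x →
      HasDerivAt (fun y => (deriv u y)^2/2) (deriv u x * d) x := by
    intro x d hd
    have h : HasDerivAt (fun y => (deriv u y)^2/2) (((2:ℕ):ℝ) * deriv u x ^ (2-1) * d / 2) x := (hd.pow 2).div_const 2
    convert h using 1
    push_cast
    ring
  have hΦd : ∀ x, x ∉ Set.Icc (0:ℝ) L →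
      HasDerivAt (fun y => (deriv u y)^2/2 + G (u y)) (-c * (deriv u x)^2) x := by
    intro x hx
    have hx0 : x ≠ 0 := by rintro rfl; exact hx ⟨le_rfl, hL.le⟩
    have hxL : x ≠ L := by rintro rfl; exact hx ⟨hL.le, le_rfl⟩
    have hdd := hasDerivAt_deriv_of_contDiffAt (hu2 x hx0 hxL)
    have h1 := hsq x _ hdd
    have h2 : HasDerivAt (fun y => G (u y)) (g (u x) * deriv u x) x :=
      (hGd (u x)).comp x (hudiff x)
    have h3 := h1.add h2
    have hE := heqg x hx
    have hval : deriv u x * deriv (deriv u) x + g (u x) * deriv u x = -c * (deriv u x)^2 := by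
      rw [← hE]; ring
    exact hval ▸ h3
  have hmono : ∀ p q : ℝ, p ≤ q → (∀ x ∈ Set.Ioo p q, x ∉ Set.Icc (0:ℝ) L) →
      (deriv u p)^2/2 + G (u p) ≤ (deriv u q)^2/2 + G (u q) := by
    intro p q hpq hsub
    have hm := monotoneOn_of_deriv_nonneg (convex_Icc p q) hΦcont.continuousOn
      (fun x hx => by
        rw [interior_Icc] at hx
        exact ((hΦd x (hsub x hx)).differentiableAt).differentiableWithinAt)
      (fun x hx => by
        rw [interior_Icc] at hx
        rw [(hΦd x (hsub x hx)).deriv]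
        exact mul_nonneg (by linarith) (sq_nonneg _))
    simpa using hm (left_mem_Icc.mpr hpq) (right_mem_Icc.mpr hpq) hpq
  have husq : ∀ x : ℝ, HasDerivAt (fun y => μ * (u y)^2/2) (μ * (u x * deriv u x)) x := by
    intro x
    have h : HasDerivAt (fun y => μ * (u y)^2/2) (μ * (((2:ℕ):ℝ) * u x ^ (2-1) * deriv u x) / 2) x := (((hudiff x).pow 2).const_mul μ).div_const 2
    convert h using 1
    push_cast
    ring
  have hΨderiv : ∀ x ∈ Set.Ioo (0:ℝ) L,
      HasDerivAt (fun y => (deriv u y)^2/2 - μ * (u y)^2/2) (-c * (deriv u x)^2) x := by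
    intro x hx
    have hx0 : x ≠ 0 := ne_of_gt hx.1
    have hxL : x ≠ L := ne_of_lt hx.2
    have hdd := hasDerivAt_deriv_of_contDiffAt (hu2 x hx0 hxL)
    have h1 := hsq x _ hdd
    have h3 := h1.sub (husq x)
    have hE := heqμ x hx
    have hval : deriv u x * deriv (deriv u) x - μ * (u x * deriv u x) = -c * (deriv u x)^2 := by
      linear_combination (-(deriv u x)) * hE
    exact hval ▸ h3
  obtain ⟨I, hIdef⟩ : ∃ I : ℝ, I = ∫ x in (0:ℝ)..L, (deriv u x)^2 := ⟨_, rfl⟩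
  have hInn : 0 ≤ I := by
    rw [hIdef]
    exact intervalIntegral.integral_nonneg hL.le (fun x _ => sq_nonneg _)
  have hgap' : (-c) * I = ((deriv u L)^2/2 - μ * (u L)^2/2)
      - ((deriv u 0)^2/2 - μ * (u 0)^2/2) := by
    have hgap := intervalIntegral.integral_eq_sub_of_hasDeriv_right_of_le hL.le
      hΨcont.continuousOn (fun x hx => (hΨderiv x hx).hasDerivWithinAt)
      ((continuous_const.mul (hu'c.pow 2)).intervalIntegrable 0 L)
    rw [hIdef, ← intervalIntegral.integral_const_mul]
    simpa using hgap
  -- the "energy" at L is nonpositive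
  have hΦL : (deriv u L)^2/2 + G (u L) ≤ 0 := by
    by_contra hpos
    push_neg at hpos
    obtain ⟨η, hη, hball⟩ := Metric.continuousAt_iff.mp (hGcont.continuousAt (x := 0))
      (((deriv u L)^2/2 + G (u L))/2) (by linarith)
    obtain ⟨N, hN⟩ := eventually_atTop.mp (htop.eventually (eventually_lt_nhds hη))
    have hε' : (0:ℝ) < min 1 ((deriv u L)^2/2 + G (u L)) := lt_min one_pos hpos
    obtain ⟨z, hz1, hz2⟩ := exists_deriv_small_ge u hu1 hub hε' (max N L)
    have hzL : L ≤ z := le_trans (le_max_right N L) hz1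
    have hchain : (deriv u L)^2/2 + G (u L) ≤ (deriv u z)^2/2 + G (u z) :=
      hmono L z hzL (fun x hx h => absurd h.2 (not_le.2 hx.1))
    have hGz : |G (u z)| < ((deriv u L)^2/2 + G (u L))/2 := by
      have hd : dist (u z) 0 < η := by
        rw [Real.dist_eq, sub_zero, abs_of_nonneg (hub z).1]
        exact hN z (le_trans (le_max_left N L) hz1)
      have h := hball hd
      rwa [Real.dist_eq, hG0, sub_zero] at h
    have hsq' : (deriv u z)^2 < (deriv u L)^2/2 + G (u L) := by
      have h1 : (deriv u z)^2 = |deriv u z|^2 := (sq_abs _).symm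
      rw [h1]
      have h2 : |deriv u z|^2 < (min 1 ((deriv u L)^2/2 + G (u L)))^2 := by
        apply pow_lt_pow_left₀ hz2 (abs_nonneg _)
        norm_num
      have h3 : (min 1 ((deriv u L)^2/2 + G (u L)))^2 ≤
          1 * ((deriv u L)^2/2 + G (u L)) := by
        rw [sq]
        exact mul_le_mul (min_le_left _ _) (min_le_right _ _) hε'.le zero_le_one
      linarith
    have hGz' : G (u z) < ((deriv u L)^2/2 + G (u L))/2 := lt_of_le_of_lt (le_abs_self _) hGz
    linarith [hchain, hsq', hGz']
  have hGLle : G (u L) ≤ 0 := by linarith [sq_nonneg (deriv u L), hΦL]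
  have hu'L : (deriv u L)^2/2 ≤ K := by
    have h1 : -K ≤ G (u L) := (abs_le.mp (hGK _ ⟨(hub L).1, (hub L).2⟩)).1
    linarith [hΦL]
  have hIK : (-c) * I ≤ K + μ/2 := by
    rw [hgap']
    have b1 : 0 ≤ μ * (u L)^2/2 := by positivity
    have b2' : (u 0)^2 ≤ 1 := pow_le_one₀ (hub 0).1 (hub 0).2
    have b2 : μ * (u 0)^2/2 ≤ μ/2 := by
      have := mul_le_mul_of_nonneg_left b2' hμ.le
      linarith
    have b3 : 0 ≤ (deriv u 0)^2/2 := by positivity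
    linarith
  by_cases hcase : ∃ y, y ≤ 0 ∧ u y ≤ θ
  · -- Case 1 : u dips below θ at some point y0 ≤ 0
    have hSclosed : IsClosed {y : ℝ | y ≤ 0 ∧ u y ≤ θ} := by
      have : {y : ℝ | y ≤ 0 ∧ u y ≤ θ} = Set.Iic 0 ∩ u ⁻¹' (Set.Iic θ) := by
        ext y; simp [Set.mem_Iic]
      rw [this]
      exact isClosed_Iic.inter (isClosed_Iic.preimage hucont)
    have hSne : {y : ℝ | y ≤ 0 ∧ u y ≤ θ}.Nonempty := by
      obtain ⟨y, hy⟩ := hcase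
      exact ⟨y, hy⟩
    have hbdd : BddBelow {y : ℝ | y ≤ 0 ∧ u y ≤ θ} := by
      obtain ⟨N1, hN1⟩ := eventually_atBot.mp (hbot.eventually (eventually_gt_nhds hθlt1))
      refine ⟨N1, fun y hy => ?_⟩
      by_contra hlt
      push_neg at hlt
      exact absurd hy.2 (not_le.2 (hN1 y hlt.le))
    obtain ⟨hy0le, hy0u⟩ := hSclosed.csInf_mem hSne hbdd
    have hlow : ∀ t, t < sInf {y : ℝ | y ≤ 0 ∧ u y ≤ θ} → θ < u t := by
      intro t ht
      by_contra hle
      push_neg at hle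
      have hmem : t ∈ {y : ℝ | y ≤ 0 ∧ u y ≤ θ} := ⟨le_trans ht.le hy0le, hle⟩
      exact absurd (csInf_le hbdd hmem) (not_le.2 ht)
    obtain ⟨y0, hy0def⟩ : ∃ y0 : ℝ, y0 = sInf {y : ℝ | y ≤ 0 ∧ u y ≤ θ} := ⟨_, rfl⟩
    rw [← hy0def] at hy0le hy0u hlow
    have hy0θ : θ ≤ u y0 := by
      have ht : Tendsto u (𝓝[<] y0) (𝓝 (u y0)) := hucont.continuousAt.continuousWithinAt
      exact ge_of_tendsto ht (eventually_of_mem self_mem_nhdsWithin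
        (fun t ht' => (hlow t ht').le))
    have hslope : deriv u y0 ≤ c * (1 - θ) := by
      apply le_of_forall_pos_le_add
      intro ε hε
      have h1c : (0:ℝ) < 1 - c := by linarith
      obtain ⟨ε', hε'def⟩ : ∃ e : ℝ, e = ε / (1 - c) := ⟨_, rfl⟩
      have hε' : 0 < ε' := by rw [hε'def]; exact div_pos hε h1c
      obtain ⟨N2, hN2⟩ := eventually_atBot.mp
        (hbot.eventually (eventually_gt_nhds (by linarith : 1 - ε' < 1)))
      obtain ⟨z, hz1, hz2⟩ := exists_deriv_small_le u hu1 hub hε' (min N2 y0)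
      have hzy : z ≤ y0 := le_trans hz1 (min_le_right _ _)
      have huz : 1 - ε' < u z := hN2 z (le_trans hz1 (min_le_left _ _))
      have hrange : ∀ t ∈ Set.Icc z y0, 0 ≤ g (u t) := by
        intro t ht
        rcases lt_or_eq_of_le ht.2 with h' | h'
        · exact hδg _ (by linarith [hlow t h', hθδ]) (hub t).2
        · rw [h']
          exact hδg _ (by linarith) (hub y0).2
      have hintd : ∀ y : ℝ, HasDerivAt (fun w => ∫ t in z..w, g (u t)) (g (u y)) y :=
        fun y => ((hgc.comp hucont).integral_hasStrictDerivAt z y).hasDerivAt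
      have hAcont : Continuous (fun y => deriv u y + c * u y + ∫ t in z..y, g (u t)) :=
        (hu'c.add (continuous_const.mul hucont)).add
          (Differentiable.continuous (fun y => (hintd y).differentiableAt))
      have hAderiv : ∀ y ∈ Set.Ioo z y0,
          HasDerivAt (fun w => deriv u w + c * u w + ∫ t in z..w, g (u t)) 0 y := by
        intro y hy
        have hy0' : y < 0 := lt_of_lt_of_le hy.2 hy0le
        have hyIcc : y ∉ Set.Icc (0:ℝ) L := fun h => absurd h.1 (not_le.2 hy0')
        have hdd := hasDerivAt_deriv_of_contDiffAt
          (hu2 y (ne_of_lt hy0') (ne_of_lt (lt_trans hy0' hL)))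
        have h1 := (hdd.add ((hudiff y).const_mul c)).add (hintd y)
        have hE := heqg y hyIcc
        have hval : deriv (deriv u) y + c * deriv u y + g (u y) = 0 := by linarith
        exact hval ▸ h1
      have hanti := antitoneOn_of_deriv_nonpos (convex_Icc z y0) hAcont.continuousOn
        (fun y hy => by
          rw [interior_Icc] at hy
          exact (hAderiv y hy).differentiableAt.differentiableWithinAt)
        (fun y hy => by
          rw [interior_Icc] at hy
          rw [(hAderiv y hy).deriv])
      have hAle : deriv u y0 + c * u y0 + (∫ t in z..y0, g (u t)) ≤
          deriv u z + c * u z + ∫ t in z..z, g (u t) := by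
        simpa using hanti (left_mem_Icc.mpr hzy) (right_mem_Icc.mpr hzy) hzy
      rw [intervalIntegral.integral_same] at hAle
      have hint0 : 0 ≤ ∫ t in z..y0, g (u t) := intervalIntegral.integral_nonneg hzy hrange
      have h5 : deriv u y0 + c * u y0 ≤ deriv u z + c * u z := by linarith
      have h6 : deriv u z < ε' := lt_of_le_of_lt (le_abs_self _) hz2
      have h7 : c * u z ≤ c * (1 - ε') := mul_le_mul_of_nonpos_left huz.le hcneg.le
      have h8 : (-c) * u y0 ≤ (-c) * θ := mul_le_mul_of_nonneg_left hy0u hcpos.le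
      have h9 : ε' * (1 - c) = ε := by
        rw [hε'def]
        field_simp
      nlinarith [h5, h6, h7, h8, h9]
    have hchain1 : (deriv u y0)^2/2 + G (u y0) ≤ (deriv u 0)^2/2 + G (u 0) :=
      hmono y0 0 hy0le (fun x hx h => absurd h.1 (not_le.2 hx.2))
    have hΨ0L : (deriv u 0)^2/2 - μ * (u 0)^2/2 ≤ (deriv u L)^2/2 - μ * (u L)^2/2 := by
      linarith [mul_nonneg hcpos.le hInn, hgap']
    have hbound : (deriv u y0)^2/2 + G (u y0) ≤ 2*K + μ/2 := by
      have b1 : G (u 0) ≤ K := le_trans (le_abs_self _) (hGK _ ⟨(hub 0).1, (hub 0).2⟩)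
      have b2' : (u 0)^2 ≤ 1 := pow_le_one₀ (hub 0).1 (hub 0).2
      have b2 : μ * (u 0)^2/2 ≤ μ/2 := by
        have := mul_le_mul_of_nonneg_left b2' hμ.le
        linarith
      have b3 : -K ≤ G (u L) := (abs_le.mp (hGK _ ⟨(hub L).1, (hub L).2⟩)).1
      have b4 : 0 ≤ μ * (u L)^2/2 := by positivity
      linarith [hchain1, hΨ0L, hΦL]
    have hGy0 : -K ≤ G (u y0) := (abs_le.mp (hGK _ ⟨(hub y0).1, (hub y0).2⟩)).1
    have hcθ : c * (1 - θ) ≤ 0 := mul_nonpos_of_nonpos_of_nonneg hcneg.le (by linarith)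
    have hsq2 : (c*(1-θ))^2 ≤ (deriv u y0)^2 :=
      sq_le_sq_of_le_of_nonpos hslope hcθ
    have hfin1 : (c*(δ/2))^2/2 - K ≤ 2*K + μ/2 := by
      have h1θ : 1 - θ = δ/2 := by rw [hθdef]; ring
      rw [← h1θ]
      linarith [hbound, hGy0, hsq2]
    have hfin2 : c^2*δ^2 ≤ 24*K + 4*μ := arith_case1_sq c δ K μ hfin1
    exact arith_case1_final c δ K μ hKnn hμ hδpos hcb1 hfin2
  · -- Case 2 : u stays above θ on (-∞, 0]
    push_neg at hcase
    have hu0 : θ < u 0 := hcase 0 le_rfl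
    obtain ⟨t, htdef⟩ : ∃ t : ℝ, t = δ / (2*Lbar) := ⟨_, rfl⟩
    have htpos : 0 < t := by rw [htdef]; positivity
    have hftc : u L - u 0 = ∫ x in (0:ℝ)..L, deriv u x := by
      rw [intervalIntegral.integral_deriv_eq_sub
        (fun x _ => (hu1.differentiable one_ne_zero).differentiableAt)
        (hu'c.intervalIntegrable 0 L)]
    have hpt : ∀ x : ℝ, -(deriv u x) ≤ t/2 + (deriv u x)^2/(2*t) := by
      intro x
      have h2t : (0:ℝ) < 2*t := by linarith
      have h1 : -(deriv u x) * (2*t) ≤ t^2 + (deriv u x)^2 :=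
        arith_amgm (deriv u x) t htpos
      calc -(deriv u x) = (-(deriv u x) * (2*t))/(2*t) := by field_simp
      _ ≤ (t^2 + (deriv u x)^2)/(2*t) := by
          exact div_le_div_of_nonneg_right h1 h2t.le
      _ = t/2 + (deriv u x)^2/(2*t) := by field_simp
    have hmonoI : u 0 - u L ≤ t/2*L + I/(2*t) := by
      have h1 : u 0 - u L = ∫ x in (0:ℝ)..L, -(deriv u x) := by
        rw [intervalIntegral.integral_neg]
        linarith [hftc]
      have h2 : (∫ x in (0:ℝ)..L, -(deriv u x)) ≤
          ∫ x in (0:ℝ)..L, (t/2 + (deriv u x)^2/(2*t)) :=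
        intervalIntegral.integral_mono_on hL.le (hu'c.neg.intervalIntegrable 0 L)
          ((continuous_const.add ((hu'c.pow 2).div_const (2*t))).intervalIntegrable 0 L)
          (fun x _ => hpt x)
      have h3 : (∫ x in (0:ℝ)..L, (t/2 + (deriv u x)^2/(2*t))) = t/2*L + I/(2*t) := by
        rw [intervalIntegral.integral_add (g := fun x => (deriv u x)^2/(2*t)) intervalIntegrable_const
          (((hu'c.pow 2).div_const (2*t)).intervalIntegrable 0 L),
          intervalIntegral.integral_const, intervalIntegral.integral_div]
        rw [hIdef]
        simp [smul_eq_mul]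
        ring
      linarith
    have hIle : I ≤ (K + μ/2)/(-c) := by
      rw [le_div_iff₀ hcpos]
      linarith [hIK]
    have e1 : t/2*L ≤ δ/4 := by
      have h1 : t/2*L ≤ t/2*Lbar := mul_le_mul_of_nonneg_left hLb (by linarith)
      have h2 : t/2*Lbar = δ/4 := by
        rw [htdef]
        field_simp
        ring
      linarith
    have e2 : I/(2*t) ≤ δ/4 := by
      have h0 : I/(2*t) = I*Lbar/δ := by
        rw [htdef]
        field_simp
      rw [h0, div_le_iff₀ hδpos]
      have h1 : I*Lbar ≤ ((K + μ/2)/(-c))*Lbar := mul_le_mul_of_nonneg_right hIle hLbar.le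
      have h2 : ((K + μ/2)/(-c))*Lbar ≤ δ/4*δ := by
        rw [div_mul_eq_mul_div, div_le_iff₀ hcpos]
        exact arith_case2 c δ K μ Lbar hcpos hμ hLbar hcb2
      linarith
    have huL : 1 - δ ≤ u L := by
      have h1 : u 0 - u L ≤ δ/2 := by linarith [hmonoI, e1, e2]
      rw [hθdef] at hu0
      linarith
    have hfinal := hδG (u L) huL (hub L).2
    linarith [hGLle, hG1pos]
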